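/- arXiv:math-ph/0407034 — 4 statements merged into one kernel-verified Lean document; each statement's English description precedes it below -/
import Mathlib

section
/- For all integers a ≥ 1 and all integers b with |b| ≤ a, one has a^b e^{−b²/a} ≤ (a+b)!/a! ≤ a^b e^{b²/a}, where a^b denotes the real power (so that for negative b the bounds read a^{−|b|} e^{−b²/a} ≤ (a−|b|)!/a! ≤ a^{−|b|} e^{b²/a}). -/
/-!
For `b = n ≥ 0` the ratio is the rising product `(a+1)⋯(a+n)`, which lies between `a^n` and
`(a+n)^n ≤ (a e^{n/a})^n`. For `b = -c` it is the reciprocal of the falling product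
`D = a(a-1)⋯(a-c+1) ≤ a^c`. The lower bound on `D` is a discrete Stirling estimate: `m^m/(m! e^m)`
decreases in `m` because `(1+1/m)^m ≤ e`, so comparing `m = a` with `m = a-c` gives
`a^a ≤ (a-c)^(a-c) D e^c`, and `(a-c) e^{c/a} ≤ a` turns this into `a^c e^{-c²/a} ≤ D`.
-/

open Nat Real

lemma succ_pow_le_exp_one_mul_pow (m : ℕ) : ((m : ℝ) + 1) ^ m ≤ exp 1 * m ^ m := by
  rcases eq_or_ne m 0 with rfl | hm
  · simp [one_le_exp zero_le_one]
  calc ((m : ℝ) + 1) ^ m = (1 + (m : ℝ)⁻¹) ^ m * m ^ m := by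
        rw [← mul_pow]; congr 1; field_simp
    _ ≤ exp 1 * m ^ m := by gcongr; exact one_add_inv_pow_le_exp

lemma antitone_pow_div_factorial_mul_exp :
    Antitone fun m : ℕ => (m : ℝ) ^ m / (m ! * exp m) := by
  refine antitone_nat_of_succ_le fun m => ?_
  have key := succ_pow_le_exp_one_mul_pow m
  rw [div_le_div_iff₀ (by positivity) (by positivity)]
  push_cast [factorial_succ, pow_succ, exp_add]
  have : 0 ≤ (m ! : ℝ) * exp m * ((m : ℝ) + 1) := by positivity
  nlinarith [mul_le_mul_of_nonneg_right key this]

lemma pow_le_pow_sub_mul_descFactorial_mul_exp {a c : ℕ} (hc : c ≤ a) :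
    (a : ℝ) ^ a ≤ ((a - c : ℕ) : ℝ) ^ (a - c) * a.descFactorial c * exp c := by
  have h := antitone_pow_div_factorial_mul_exp (Nat.sub_le a c)
  have hfac : ((a - c)! : ℝ) * a.descFactorial c = a ! := by
    exact_mod_cast factorial_mul_descFactorial hc
  have hexp : exp (a : ℝ) = exp ((a - c : ℕ) : ℝ) * exp c := by
    rw [← exp_add, Nat.cast_sub hc, sub_add_cancel]
  simp only at h
  rw [div_le_div_iff₀ (by positivity) (by positivity), ← hfac, hexp] at h
  have : 0 < ((a - c)! : ℝ) * exp ((a - c : ℕ) : ℝ) := by positivity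
  nlinarith

lemma pow_mul_exp_neg_le_descFactorial {a c : ℕ} (hc : c ≤ a) :
    (a : ℝ) ^ c * exp (-(c : ℝ) ^ 2 / a) ≤ a.descFactorial c := by
  rcases Nat.eq_zero_or_pos a with rfl | ha
  · obtain rfl : c = 0 := by omega
    simp
  set m := a - c with hm
  have hmc : (m : ℝ) = a - c := Nat.cast_sub hc
  have ha' : (0 : ℝ) < a := by exact_mod_cast ha
  have hbase : (m : ℝ) * exp (c / a) ≤ a :=
    calc (m : ℝ) * exp (c / a) = a * (1 - c / a) * exp (c / a) := by rw [hmc]; field_simp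
      _ ≤ a * exp (-(c / a)) * exp (c / a) := by gcongr; exact one_sub_le_exp_neg _
      _ = a := by rw [mul_assoc, ← exp_add, neg_add_cancel, exp_zero, mul_one]
  have hexp : exp c * exp (-(c : ℝ) ^ 2 / a) = exp (c / a) ^ m := by
    rw [← exp_add, ← exp_nat_mul, hmc]; congr 1; field_simp; ring
  have hpow : (a : ℝ) ^ a = a ^ c * a ^ m := by rw [← pow_add, hm, Nat.add_sub_cancel' hc]
  have key : (m : ℝ) ^ m * exp c * ((a : ℝ) ^ c * exp (-(c : ℝ) ^ 2 / a))
      ≤ (m : ℝ) ^ m * exp c * a.descFactorial c :=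
    calc (m : ℝ) ^ m * exp c * ((a : ℝ) ^ c * exp (-(c : ℝ) ^ 2 / a))
        = a ^ c * ((m : ℝ) * exp (c / a)) ^ m := by rw [mul_pow, ← hexp]; ring
      _ ≤ a ^ c * a ^ m := by gcongr
      _ ≤ (m : ℝ) ^ m * exp c * a.descFactorial c := by
        rw [← hpow]; linarith [pow_le_pow_sub_mul_descFactorial_mul_exp hc]
  have hpos : (0 : ℝ) < (m : ℝ) ^ m := by exact_mod_cast Nat.pow_self_pos
  exact le_of_mul_le_mul_left key (by positivity)

lemma ascFactorial_le_pow_mul_exp {a : ℕ} (ha : 0 < a) (n : ℕ) :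
    ((a + 1).ascFactorial n : ℝ) ≤ a ^ n * exp (n ^ 2 / a) := by
  have ha' : (0 : ℝ) < a := by exact_mod_cast ha
  calc ((a + 1).ascFactorial n : ℝ) ≤ ((a + n : ℕ) : ℝ) ^ n := by
        exact_mod_cast ascFactorial_le_pow_add a n
    _ = (a * (n / a + 1)) ^ n := by push_cast; congr 1; field_simp; ring
    _ ≤ (a * exp (n / a)) ^ n := by gcongr; exact add_one_le_exp _
    _ = a ^ n * exp (n ^ 2 / a) := by rw [mul_pow, ← exp_nat_mul]; congr 2; ring

lemma factorial_add_div_factorial_bounds {a : ℕ} (ha : 0 < a) (n : ℕ) :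
    (a : ℝ) ^ n * exp (-(n : ℝ) ^ 2 / a) ≤ ((a + n)! : ℝ) / a ! ∧
      ((a + n)! : ℝ) / a ! ≤ (a : ℝ) ^ n * exp ((n : ℝ) ^ 2 / a) := by
  have hratio : ((a + n)! : ℝ) / a ! = (a + 1).ascFactorial n := by
    rw [div_eq_iff (by positivity), mul_comm]; exact_mod_cast (factorial_mul_ascFactorial a n).symm
  rw [hratio]
  refine ⟨?_, ascFactorial_le_pow_mul_exp ha n⟩
  calc (a : ℝ) ^ n * exp (-(n : ℝ) ^ 2 / a) ≤ (a : ℝ) ^ n * 1 := by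
        gcongr; rw [exp_le_one_iff]; exact div_nonpos_of_nonpos_of_nonneg (by nlinarith) a.cast_nonneg
    _ ≤ ((a + 1 : ℕ) : ℝ) ^ n := by rw [mul_one]; gcongr; exact_mod_cast a.le_succ
    _ ≤ (a + 1).ascFactorial n := by exact_mod_cast pow_succ_le_ascFactorial (a + 1) n

lemma factorial_sub_div_factorial_bounds {a c : ℕ} (hc : c ≤ a) :
    ((a : ℝ) ^ c)⁻¹ * exp (-(c : ℝ) ^ 2 / a) ≤ ((a - c)! : ℝ) / a ! ∧
      ((a - c)! : ℝ) / a ! ≤ ((a : ℝ) ^ c)⁻¹ * exp ((c : ℝ) ^ 2 / a) := by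
  have hratio : ((a - c)! : ℝ) / a ! = ((a.descFactorial c : ℕ) : ℝ)⁻¹ := by
    rw [← factorial_mul_descFactorial hc]; push_cast
    rw [div_mul_eq_div_div, div_self (by positivity), one_div]
  have hpos : (0 : ℝ) < a.descFactorial c := by exact_mod_cast descFactorial_pos.mpr hc
  have hpow : ((a.descFactorial c : ℕ) : ℝ) ≤ (a : ℝ) ^ c := by exact_mod_cast descFactorial_le_pow a c
  rw [hratio, neg_div, exp_neg]
  constructor
  · rw [← mul_inv]
    refine inv_anti₀ hpos (hpow.trans (le_mul_of_one_le_right (hpos.le.trans hpow) ?_))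
    exact one_le_exp (by positivity)
  · rw [← inv_inv (exp _), ← mul_inv, ← exp_neg, ← neg_div]
    exact inv_anti₀ (by have := hpos.trans_le hpow; positivity) (pow_mul_exp_neg_le_descFactorial hc)

/-- For all integers `a ≥ 1` and all integers `b` with `|b| ≤ a`,
`a^b e^{−b²/a} ≤ (a+b)!/a! ≤ a^b e^{b²/a}`, where `a^b` is the real (integer) power. -/
theorem statement4 (a b : ℤ) (ha : 1 ≤ a) (hb : |b| ≤ a) :
    (a : ℝ) ^ b * Real.exp (-(b : ℝ) ^ 2 / (a : ℝ)) ≤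
        ((a + b).toNat.factorial : ℝ) / (a.toNat.factorial : ℝ) ∧
      ((a + b).toNat.factorial : ℝ) / (a.toNat.factorial : ℝ) ≤
        (a : ℝ) ^ b * Real.exp ((b : ℝ) ^ 2 / (a : ℝ)) := by
  lift a to ℕ using by omega
  rcases le_or_gt 0 b with hb0 | hb0
  · lift b to ℕ using hb0 with n
    have hsum : ((a : ℤ) + n).toNat = a + n := by omega
    simpa only [hsum, Int.toNat_natCast, zpow_natCast, Int.cast_natCast]
      using factorial_add_div_factorial_bounds (by omega) n
  · obtain ⟨c, rfl⟩ : ∃ c : ℕ, b = -c := ⟨b.natAbs, by omega⟩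
    have hdiff : ((a : ℤ) + -c).toNat = a - c := by omega
    simpa only [hdiff, Int.toNat_natCast, zpow_neg, zpow_natCast, Int.cast_neg,
      Int.cast_natCast, neg_sq] using factorial_sub_div_factorial_bounds (a := a) (by rw [abs_neg, Nat.abs_cast] at hb; omega)
end

section
/- Let κ > 0, c ∈ (0,1), and let F:(−1,1) → ℝ be any convex function. Then the function m ↦ inf_{θ∈[0,1]} [−κθc − Ξ(m,θ;c)] + F(m) is strictly convex on (−1,1). In particular, for every h ∈ ℝ, m ↦ −hm + inf_{θ∈[0,1]} [−κθc − Ξ(m,θ;c)] + F(m) is strictly convex on (−1,1). -/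
open scoped BigOperators
open Filter

noncomputable section

/-- Entropy function of the Bernoulli distribution (finite branch). -/
def entS (p : ℝ) : ℝ := p * Real.log p + (1 - p) * Real.log (1 - p)

/-- Mole fraction `p_+ = 2θc/(1+m)`. -/
def pPlus (m θ c : ℝ) : ℝ := 2 * θ * c / (1 + m)

/-- Mole fraction `p_- = 2(1-θ)c/(1-m)`. -/
def pMinus (m θ c : ℝ) : ℝ := 2 * (1 - θ) * c / (1 - m)

/-- `Ξ(m,θ;c)` (finite branch). -/
def Xi (m θ c : ℝ) : ℝ :=
  -((1 + m) / 2) * entS (pPlus m θ c) - ((1 - m) / 2) * entS (pMinus m θ c)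

/-- Entropy function with the convention `S(p) = +∞` for `p ∉ [0,1]`. -/
def entSE (p : ℝ) : EReal := if 0 ≤ p ∧ p ≤ 1 then ((entS p : ℝ) : EReal) else ⊤

/-- `-Ξ(m,θ;c)` as an extended real (`+∞` where some mole fraction leaves `[0,1]`). -/
def negXiE (m θ c : ℝ) : EReal :=
  (((1 + m) / 2 : ℝ) : EReal) * entSE (pPlus m θ c)
    + (((1 - m) / 2 : ℝ) : EReal) * entSE (pMinus m θ c)

/-!
With `a = (1 + m) / 2`, the objective `−κθc − Ξ(m,θ;c)` is a linear term plus the perspectives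
`a S(θc / a)` and `(1 − a) S((1 − θ)c / (1 − a))` of the strictly convex `S`, so it is jointly
convex in `(m, θ)` on a convex feasible region, and its partial minimum over `θ` is convex in `m`.
A perspective of a strictly convex function is strictly convex off rays through the origin; for
`m₁ ≠ m₂` this leaves only the homogeneous state `θ = (1 + m) / 2`, `p₊ = p₋ = c`. There the
`θ`-derivative of the objective is `−κc < 0`, so that state is never a minimiser and the
inequality between minima is strict.
-/

open Set Topology

lemma entS_eq_neg_binEntropy : entS = -Real.binEntropy := by
  funext p
  simp only [entS, Real.binEntropy, Real.log_inv, Pi.neg_apply]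
  ring

lemma strictConvexOn_entS : StrictConvexOn ℝ (Icc 0 1) entS :=
  entS_eq_neg_binEntropy ▸ Real.strictConcave_binEntropy.neg

lemma continuous_entS : Continuous entS :=
  entS_eq_neg_binEntropy ▸ Real.binEntropy_continuous.neg

lemma hasDerivAt_entS {p : ℝ} (hp₀ : p ≠ 0) (hp₁ : p ≠ 1) :
    HasDerivAt entS (Real.log p - Real.log (1 - p)) p := by
  rw [entS_eq_neg_binEntropy]
  exact (Real.hasDerivAt_binEntropy hp₀ hp₁).neg.congr_deriv (by ring)

section Perspective

variable {f : ℝ → ℝ} {s : Set ℝ} {a₁ a₂ x₁ x₂ t₁ t₂ : ℝ}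

lemma perspective_combo (ha₁ : 0 < a₁) (ha₂ : 0 < a₂) (hA : t₁ * a₁ + t₂ * a₂ ≠ 0) :
    (t₁ * x₁ + t₂ * x₂) / (t₁ * a₁ + t₂ * a₂)
      = (t₁ * a₁ / (t₁ * a₁ + t₂ * a₂)) * (x₁ / a₁)
        + (t₂ * a₂ / (t₁ * a₁ + t₂ * a₂)) * (x₂ / a₂) := by
  field_simp

lemma ConvexOn.perspective_le (hf : ConvexOn ℝ s f) (ha₁ : 0 < a₁) (ha₂ : 0 < a₂)
    (hx₁ : x₁ / a₁ ∈ s) (hx₂ : x₂ / a₂ ∈ s) (ht₁ : 0 ≤ t₁) (ht₂ : 0 ≤ t₂) :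
    (t₁ * a₁ + t₂ * a₂) * f ((t₁ * x₁ + t₂ * x₂) / (t₁ * a₁ + t₂ * a₂))
      ≤ t₁ * (a₁ * f (x₁ / a₁)) + t₂ * (a₂ * f (x₂ / a₂)) := by
  rcases (add_nonneg (mul_nonneg ht₁ ha₁.le) (mul_nonneg ht₂ ha₂.le)).eq_or_lt with hA | hA
  · have h₁ : t₁ = 0 := by nlinarith [mul_nonneg ht₁ ha₁.le, mul_nonneg ht₂ ha₂.le]
    have h₂ : t₂ = 0 := by nlinarith [mul_nonneg ht₁ ha₁.le, mul_nonneg ht₂ ha₂.le]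
    simp [h₁, h₂]
  have := hf.2 hx₁ hx₂ (by positivity) (by positivity)
    (by field_simp : t₁ * a₁ / (t₁ * a₁ + t₂ * a₂) + t₂ * a₂ / (t₁ * a₁ + t₂ * a₂) = 1)
  rw [smul_eq_mul, smul_eq_mul, ← perspective_combo ha₁ ha₂ hA.ne', smul_eq_mul,
    smul_eq_mul] at this
  calc _ ≤ (t₁ * a₁ + t₂ * a₂) * (t₁ * a₁ / (t₁ * a₁ + t₂ * a₂) * f (x₁ / a₁)
          + t₂ * a₂ / (t₁ * a₁ + t₂ * a₂) * f (x₂ / a₂)) := by gcongr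
    _ = _ := by field_simp

lemma StrictConvexOn.perspective_lt (hf : StrictConvexOn ℝ s f) (ha₁ : 0 < a₁) (ha₂ : 0 < a₂)
    (hx₁ : x₁ / a₁ ∈ s) (hx₂ : x₂ / a₂ ∈ s) (hx : x₁ / a₁ ≠ x₂ / a₂)
    (ht₁ : 0 < t₁) (ht₂ : 0 < t₂) :
    (t₁ * a₁ + t₂ * a₂) * f ((t₁ * x₁ + t₂ * x₂) / (t₁ * a₁ + t₂ * a₂))
      < t₁ * (a₁ * f (x₁ / a₁)) + t₂ * (a₂ * f (x₂ / a₂)) := by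
  have hA : 0 < t₁ * a₁ + t₂ * a₂ := by positivity
  have := hf.2 hx₁ hx₂ hx (by positivity) (by positivity)
    (by field_simp : t₁ * a₁ / (t₁ * a₁ + t₂ * a₂) + t₂ * a₂ / (t₁ * a₁ + t₂ * a₂) = 1)
  rw [smul_eq_mul, smul_eq_mul, ← perspective_combo ha₁ ha₂ hA.ne', smul_eq_mul,
    smul_eq_mul] at this
  calc _ < (t₁ * a₁ + t₂ * a₂) * (t₁ * a₁ / (t₁ * a₁ + t₂ * a₂) * f (x₁ / a₁)
          + t₂ * a₂ / (t₁ * a₁ + t₂ * a₂) * f (x₂ / a₂)) := by gcongr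
    _ = _ := by field_simp

end Perspective

/-- The points `θ ∈ [0,1]` at which both mole fractions lie in `[0,1]`, i.e. where `negXiE` is
finite. -/
def feasible (c m : ℝ) : Set ℝ :=
  {θ | 0 ≤ θ ∧ θ ≤ 1 ∧ 2 * θ * c ≤ 1 + m ∧ 2 * (1 - θ) * c ≤ 1 - m}

def objective (κ c m θ : ℝ) : ℝ :=
  -(κ * θ * c) + (1 + m) / 2 * entS (pPlus m θ c) + (1 - m) / 2 * entS (pMinus m θ c)

def minObjective (κ c m : ℝ) : ℝ :=
  (⨅ θ ∈ Icc (0 : ℝ) 1, (((-(κ * θ * c)) : ℝ) : EReal) + negXiE m θ c).toReal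

variable {κ c m θ : ℝ}

lemma pPlus_eq_div : pPlus m θ c = θ * c / ((1 + m) / 2) := by
  rw [pPlus, div_div_eq_mul_div]; ring

lemma pMinus_eq_div : pMinus m θ c = (1 - θ) * c / ((1 - m) / 2) := by
  rw [pMinus, div_div_eq_mul_div]; ring

lemma pPlus_le_one_iff (hm : m ∈ Ioo (-1 : ℝ) 1) : pPlus m θ c ≤ 1 ↔ 2 * θ * c ≤ 1 + m := by
  unfold pPlus; rw [div_le_one (by linarith [hm.1])]

lemma pMinus_le_one_iff (hm : m ∈ Ioo (-1 : ℝ) 1) : pMinus m θ c ≤ 1 ↔ 2 * (1 - θ) * c ≤ 1 - m := by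
  unfold pMinus; rw [div_le_one (by linarith [hm.2])]

lemma pPlus_mem_Icc (hm : m ∈ Ioo (-1 : ℝ) 1) (hc : 0 ≤ c) (hθ : θ ∈ feasible c m) :
    pPlus m θ c ∈ Icc 0 1 :=
  ⟨div_nonneg (by have := hθ.1; positivity) (by linarith [hm.1]),
    (pPlus_le_one_iff hm).2 hθ.2.2.1⟩

lemma pMinus_mem_Icc (hm : m ∈ Ioo (-1 : ℝ) 1) (hc : 0 ≤ c) (hθ : θ ∈ feasible c m) :
    pMinus m θ c ∈ Icc 0 1 :=
  ⟨div_nonneg (mul_nonneg (by linarith [hθ.2.1]) hc) (by linarith [hm.2]),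
    (pMinus_le_one_iff hm).2 hθ.2.2.2⟩

lemma summand_eq_of_mem (hm : m ∈ Ioo (-1 : ℝ) 1) (hc : 0 ≤ c) (hθ : θ ∈ feasible c m) :
    (((-(κ * θ * c)) : ℝ) : EReal) + negXiE m θ c = objective κ c m θ := by
  obtain ⟨hp₀, hp₁⟩ := pPlus_mem_Icc hm hc hθ
  obtain ⟨hq₀, hq₁⟩ := pMinus_mem_Icc hm hc hθ
  rw [negXiE, entSE, entSE, if_pos ⟨hp₀, hp₁⟩, if_pos ⟨hq₀, hq₁⟩, objective]
  norm_cast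
  ring

lemma summand_eq_top_of_notMem (hm : m ∈ Ioo (-1 : ℝ) 1) (hθ : θ ∈ Icc (0 : ℝ) 1)
    (hθ' : θ ∉ feasible c m) :
    (((-(κ * θ * c)) : ℝ) : EReal) + negXiE m θ c = ⊤ := by
  have ha : 0 < (1 + m) / 2 := by linarith [hm.1]
  have hb : 0 < (1 - m) / 2 := by linarith [hm.2]
  have mul_entSE_ne_bot : ∀ {a : ℝ} (p : ℝ), 0 < a → (a : EReal) * entSE p ≠ ⊥ := by
    intro a p ha
    unfold entSE
    split_ifs
    · exact_mod_cast EReal.coe_ne_bot _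
    · rw [EReal.coe_mul_top_of_pos ha]; exact top_ne_bot
  have hout : 1 < pPlus m θ c ∨ 1 < pMinus m θ c := by
    contrapose! hθ'
    exact ⟨hθ.1, hθ.2, (pPlus_le_one_iff hm).1 hθ'.1, (pMinus_le_one_iff hm).1 hθ'.2⟩
  rw [negXiE]
  rcases hout with h | h
  · rw [show entSE (pPlus m θ c) = ⊤ from if_neg fun hp => by linarith [hp.2],
      EReal.coe_mul_top_of_pos ha,
      EReal.top_add_of_ne_bot (mul_entSE_ne_bot _ hb)]
    exact EReal.coe_add_top _
  · rw [show entSE (pMinus m θ c) = ⊤ from if_neg fun hp => by linarith [hp.2],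
      EReal.coe_mul_top_of_pos hb,
      EReal.add_top_of_ne_bot (mul_entSE_ne_bot _ ha)]
    exact EReal.coe_add_top _

lemma minObjective_eq_of_isMinOn (hm : m ∈ Ioo (-1 : ℝ) 1) (hc : 0 ≤ c) {θ₀ : ℝ}
    (hθ₀ : θ₀ ∈ feasible c m) (hmin : IsMinOn (objective κ c m) (feasible c m) θ₀) :
    minObjective κ c m = objective κ c m θ₀ := by
  suffices h : (⨅ θ ∈ Icc (0 : ℝ) 1, (((-(κ * θ * c)) : ℝ) : EReal) + negXiE m θ c)
      = objective κ c m θ₀ by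
    rw [minObjective, h, EReal.toReal_coe]
  refine le_antisymm ?_ (le_iInf₂ fun θ hθ => ?_)
  · rw [← summand_eq_of_mem hm hc hθ₀]
    exact iInf₂_le θ₀ ⟨hθ₀.1, hθ₀.2.1⟩
  · by_cases hθ' : θ ∈ feasible c m
    · rw [summand_eq_of_mem hm hc hθ']
      exact EReal.coe_le_coe_iff.2 (hmin hθ')
    · rw [summand_eq_top_of_notMem hm hθ hθ']
      exact le_top

lemma isCompact_feasible : IsCompact (feasible c m) := by
  have : feasible c m = Icc 0 1 ∩ ({θ | 2 * θ * c ≤ 1 + m} ∩ {θ | 2 * (1 - θ) * c ≤ 1 - m}) := by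
    ext θ; simp [feasible, and_assoc]
  rw [this]
  exact isCompact_Icc.inter_right ((isClosed_le (by fun_prop) (by fun_prop)).inter
    (isClosed_le (by fun_prop) (by fun_prop)))

lemma continuous_objective : Continuous (objective κ c m) := by
  unfold objective pPlus pMinus
  have := continuous_entS
  fun_prop

lemma mid_mem_feasible (hm : m ∈ Ioo (-1 : ℝ) 1) (hc : c ≤ 1) : (1 + m) / 2 ∈ feasible c m :=
  ⟨by linarith [hm.1], by linarith [hm.2], by nlinarith [hm.1], by nlinarith [hm.2]⟩

lemma exists_isMinOn_objective (hm : m ∈ Ioo (-1 : ℝ) 1) (hc : c ≤ 1) :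
    ∃ θ₀ ∈ feasible c m, IsMinOn (objective κ c m) (feasible c m) θ₀ :=
  isCompact_feasible.exists_isMinOn ⟨_, mid_mem_feasible hm hc⟩ continuous_objective.continuousOn

lemma feasible_mem_nhds_mid (hm : m ∈ Ioo (-1 : ℝ) 1) (hc : c ∈ Ioo (0 : ℝ) 1) :
    feasible c m ∈ 𝓝 ((1 + m) / 2) := by
  have eventually_lt {f g : ℝ → ℝ} (hf : Continuous f) (hg : Continuous g)
      (h : f ((1 + m) / 2) < g ((1 + m) / 2)) : ∀ᶠ θ in 𝓝 ((1 + m) / 2), f θ < g θ :=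
    hf.continuousAt.eventually_lt hg.continuousAt h
  obtain ⟨hm₁, hm₂⟩ := hm
  obtain ⟨hc₀, hc₁⟩ := hc
  filter_upwards [eventually_gt_nhds (by linarith : (0 : ℝ) < (1 + m) / 2),
    eventually_lt_nhds (by linarith : (1 + m) / 2 < (1 : ℝ)),
    eventually_lt (f := fun θ => 2 * θ * c) (g := fun _ => 1 + m) (by fun_prop) (by fun_prop)
      (by nlinarith),
    eventually_lt (f := fun θ => 2 * (1 - θ) * c) (g := fun _ => 1 - m) (by fun_prop)
      (by fun_prop) (by nlinarith)] with θ h₀ h₁ h₂ h₃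
  exact ⟨h₀.le, h₁.le, h₂.le, h₃.le⟩

lemma hasDerivAt_objective_mid (hm : m ∈ Ioo (-1 : ℝ) 1) (hc : c ∈ Ioo (0 : ℝ) 1) :
    HasDerivAt (objective κ c m) (-(κ * c)) ((1 + m) / 2) := by
  set a := (1 + m) / 2
  set b := (1 - m) / 2
  have ha : a ≠ 0 := by simp only [a]; linarith [hm.1]
  have hb : b ≠ 0 := by simp only [b]; linarith [hm.2]
  have hD := hasDerivAt_entS hc.1.ne' hc.2.ne
  have hP : HasDerivAt (fun θ => entS (θ * c / a)) (_ * (1 * c / a)) a :=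
    hD.comp_of_eq a (((hasDerivAt_id' a).mul_const c).div_const a) (by field_simp)
  have hM : HasDerivAt (fun θ => entS ((1 - θ) * c / b)) (_ * (-1 * c / b)) a :=
    hD.comp_of_eq a ((((hasDerivAt_id' a).const_sub 1).mul_const c).div_const b)
      (by rw [show 1 - a = b by simp only [a, b]; ring, mul_div_cancel_left₀ c hb])
  have hobj : objective κ c m
      = fun θ => -(κ * θ * c) + a * entS (θ * c / a) + b * entS ((1 - θ) * c / b) := by
    funext θ; rw [objective, pPlus_eq_div, pMinus_eq_div]
  rw [hobj]
  -- both mole fractions equal `c` at the midpoint, so the two terms `± c S'(c)` cancel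
  refine ((((hasDerivAt_id' a).const_mul κ).mul_const c).neg.add (hP.const_mul a)
    |>.add (hM.const_mul b)).congr_deriv ?_
  field_simp
  ring

lemma not_isMinOn_mid (hκ : 0 < κ) (hm : m ∈ Ioo (-1 : ℝ) 1) (hc : c ∈ Ioo (0 : ℝ) 1) :
    ¬ IsMinOn (objective κ c m) (feasible c m) ((1 + m) / 2) := fun hmin =>
  (mul_pos hκ hc.1).ne' <| neg_eq_zero.1 <|
    (hmin.isLocalMin (feasible_mem_nhds_mid hm hc)).hasDerivAt_eq_zero
      (hasDerivAt_objective_mid hm hc)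

variable {m₁ m₂ θ₁ θ₂ t₁ t₂ : ℝ}

lemma combo_mem_feasible (hθ₁ : θ₁ ∈ feasible c m₁) (hθ₂ : θ₂ ∈ feasible c m₂)
    (ht₁ : 0 ≤ t₁) (ht₂ : 0 ≤ t₂) (ht : t₁ + t₂ = 1) :
    t₁ * θ₁ + t₂ * θ₂ ∈ feasible c (t₁ * m₁ + t₂ * m₂) := by
  obtain ⟨h₁, h₂, h₃, h₄⟩ := hθ₁
  obtain ⟨h₁', h₂', h₃', h₄'⟩ := hθ₂
  refine ⟨by positivity, ?_, ?_, ?_⟩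
  · nlinarith [mul_le_mul_of_nonneg_left h₂ ht₁, mul_le_mul_of_nonneg_left h₂' ht₂]
  · nlinarith [mul_le_mul_of_nonneg_left h₃ ht₁, mul_le_mul_of_nonneg_left h₃' ht₂]
  · nlinarith [mul_le_mul_of_nonneg_left h₄ ht₁, mul_le_mul_of_nonneg_left h₄' ht₂]

lemma objective_combo_lt (hm₁ : m₁ ∈ Ioo (-1 : ℝ) 1) (hm₂ : m₂ ∈ Ioo (-1 : ℝ) 1) (hc : 0 ≤ c)
    (hθ₁ : θ₁ ∈ feasible c m₁) (hθ₂ : θ₂ ∈ feasible c m₂) (ht₁ : 0 < t₁) (ht₂ : 0 < t₂)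
    (ht : t₁ + t₂ = 1)
    (hne : pPlus m₁ θ₁ c ≠ pPlus m₂ θ₂ c ∨ pMinus m₁ θ₁ c ≠ pMinus m₂ θ₂ c) :
    objective κ c (t₁ * m₁ + t₂ * m₂) (t₁ * θ₁ + t₂ * θ₂)
      < t₁ * objective κ c m₁ θ₁ + t₂ * objective κ c m₂ θ₂ := by
  have ha₁ : 0 < (1 + m₁) / 2 := by linarith [hm₁.1]
  have ha₂ : 0 < (1 + m₂) / 2 := by linarith [hm₂.1]
  have hb₁ : 0 < (1 - m₁) / 2 := by linarith [hm₁.2]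
  have hb₂ : 0 < (1 - m₂) / 2 := by linarith [hm₂.2]
  have hp₁ := pPlus_eq_div (θ := θ₁) ▸ pPlus_mem_Icc hm₁ hc hθ₁
  have hp₂ := pPlus_eq_div (θ := θ₂) ▸ pPlus_mem_Icc hm₂ hc hθ₂
  have hq₁ := pMinus_eq_div (θ := θ₁) ▸ pMinus_mem_Icc hm₁ hc hθ₁
  have hq₂ := pMinus_eq_div (θ := θ₂) ▸ pMinus_mem_Icc hm₂ hc hθ₂
  have ha : (1 + (t₁ * m₁ + t₂ * m₂)) / 2 = t₁ * ((1 + m₁) / 2) + t₂ * ((1 + m₂) / 2) := by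
    linear_combination -ht / 2
  have hb : (1 - (t₁ * m₁ + t₂ * m₂)) / 2 = t₁ * ((1 - m₁) / 2) + t₂ * ((1 - m₂) / 2) := by
    linear_combination -ht / 2
  have hx : (t₁ * θ₁ + t₂ * θ₂) * c = t₁ * (θ₁ * c) + t₂ * (θ₂ * c) := by ring
  have hy : (1 - (t₁ * θ₁ + t₂ * θ₂)) * c = t₁ * ((1 - θ₁) * c) + t₂ * ((1 - θ₂) * c) := by
    linear_combination -c * ht
  have hP := strictConvexOn_entS.convexOn.perspective_le ha₁ ha₂ hp₁ hp₂ ht₁.le ht₂.le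
  have hM := strictConvexOn_entS.convexOn.perspective_le hb₁ hb₂ hq₁ hq₂ ht₁.le ht₂.le
  simp only [objective, pPlus_eq_div, pMinus_eq_div, ha, hb, hx, hy] at hne ⊢
  rcases hne with hne | hne
  · have := strictConvexOn_entS.perspective_lt ha₁ ha₂ hp₁ hp₂ hne ht₁ ht₂
    nlinarith
  · have := strictConvexOn_entS.perspective_lt hb₁ hb₂ hq₁ hq₂ hne ht₁ ht₂
    nlinarith

/-- Writing `2θc = p₊(1 + m)` and `2(1 - θ)c = p₋(1 - m)` at both points forces `p₊ = p₋`
(as `m₁ ≠ m₂`) and then, by adding, `p₊ = c`. -/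
lemma eq_mid_of_pPlus_eq_of_pMinus_eq (hm₁ : m₁ ∈ Ioo (-1 : ℝ) 1) (hm₂ : m₂ ∈ Ioo (-1 : ℝ) 1)
    (hc : c ≠ 0) (hne : m₁ ≠ m₂) (hP : pPlus m₁ θ₁ c = pPlus m₂ θ₂ c)
    (hM : pMinus m₁ θ₁ c = pMinus m₂ θ₂ c) : θ₁ = (1 + m₁) / 2 := by
  have h₁ : 1 + m₁ ≠ 0 := by linarith [hm₁.1]
  have h₂ : 1 + m₂ ≠ 0 := by linarith [hm₂.1]
  have h₃ : 1 - m₁ ≠ 0 := by linarith [hm₁.2]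
  have h₄ : 1 - m₂ ≠ 0 := by linarith [hm₂.2]
  set p := pPlus m₁ θ₁ c
  set q := pMinus m₁ θ₁ c
  have e₁ : 2 * θ₁ * c = p * (1 + m₁) := by simp only [p, pPlus]; field_simp
  have e₂ : 2 * θ₂ * c = p * (1 + m₂) := by rw [hP, pPlus]; field_simp
  have e₃ : 2 * (1 - θ₁) * c = q * (1 - m₁) := by simp only [q, pMinus]; field_simp
  have e₄ : 2 * (1 - θ₂) * c = q * (1 - m₂) := by rw [hM, pMinus]; field_simp
  have hpq : p = q := by
    have : (p - q) * (m₁ - m₂) = 0 := by linear_combination e₂ - e₁ + e₄ - e₃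
    linarith [(mul_eq_zero.1 this).resolve_right (sub_ne_zero.2 hne)]
  have hpc : p = c := by linear_combination (-(e₁ + e₃ + (m₁ - 1) * hpq)) / 2
  have : c * (2 * θ₁ - (1 + m₁)) = 0 := by linear_combination e₁ + (1 + m₁) * hpc
  linarith [(mul_eq_zero.1 this).resolve_left hc]

lemma strictConvexOn_minObjective (hκ : 0 < κ) (hc : c ∈ Ioo (0 : ℝ) 1) :
    StrictConvexOn ℝ (Ioo (-1) 1) (minObjective κ c) := by
  refine ⟨convex_Ioo _ _, fun m₁ hm₁ m₂ hm₂ hne t₁ t₂ ht₁ ht₂ ht => ?_⟩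
  have hm := convex_Ioo (-1 : ℝ) 1 hm₁ hm₂ ht₁.le ht₂.le ht
  simp only [smul_eq_mul] at hm ⊢
  obtain ⟨θ₁, hθ₁, hmin₁⟩ := exists_isMinOn_objective (κ := κ) hm₁ hc.2.le
  obtain ⟨θ₂, hθ₂, hmin₂⟩ := exists_isMinOn_objective (κ := κ) hm₂ hc.2.le
  obtain ⟨θ, hθ, hmin⟩ := exists_isMinOn_objective (κ := κ) hm hc.2.le
  have hdiff : pPlus m₁ θ₁ c ≠ pPlus m₂ θ₂ c ∨ pMinus m₁ θ₁ c ≠ pMinus m₂ θ₂ c := by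
    by_contra! h
    exact not_isMinOn_mid hκ hm₁ hc <|
      eq_mid_of_pPlus_eq_of_pMinus_eq hm₁ hm₂ hc.1.ne' hne h.1 h.2 ▸ hmin₁
  rw [minObjective_eq_of_isMinOn hm hc.1.le hθ hmin,
    minObjective_eq_of_isMinOn hm₁ hc.1.le hθ₁ hmin₁,
    minObjective_eq_of_isMinOn hm₂ hc.1.le hθ₂ hmin₂]
  calc objective κ c (t₁ * m₁ + t₂ * m₂) θ
      ≤ objective κ c (t₁ * m₁ + t₂ * m₂) (t₁ * θ₁ + t₂ * θ₂) :=
        hmin (combo_mem_feasible hθ₁ hθ₂ ht₁.le ht₂.le ht)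
    _ < _ := objective_combo_lt hm₁ hm₂ hc.1.le hθ₁ hθ₂ ht₁ ht₂ ht hdiff

/-- For `κ > 0`, `c ∈ (0,1)` and any convex `F`, the function
`m ↦ inf_{θ∈[0,1]} [−κθc − Ξ(m,θ;c)] + F(m)` is strictly convex on `(−1,1)`;
the same holds after adding a linear term `−hm`. -/
theorem statement10 (κ c : ℝ) (hκ : 0 < κ) (hc : c ∈ Set.Ioo (0 : ℝ) 1)
    (F : ℝ → ℝ) (hF : ConvexOn ℝ (Set.Ioo (-1 : ℝ) 1) F) :
    StrictConvexOn ℝ (Set.Ioo (-1 : ℝ) 1)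
      (fun m =>
        (⨅ θ ∈ Set.Icc (0 : ℝ) 1,
            (((-(κ * θ * c)) : ℝ) : EReal) + negXiE m θ c).toReal + F m) ∧
    ∀ h : ℝ, StrictConvexOn ℝ (Set.Ioo (-1 : ℝ) 1)
      (fun m => -(h * m) +
        ((⨅ θ ∈ Set.Icc (0 : ℝ) 1,
            (((-(κ * θ * c)) : ℝ) : EReal) + negXiE m θ c).toReal + F m)) := by
  have hsum : StrictConvexOn ℝ (Ioo (-1) 1) (fun m => minObjective κ c m + F m) :=
    (strictConvexOn_minObjective hκ hc).add_convexOn hF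
  refine ⟨hsum, fun h => ?_⟩
  have hlin : ConvexOn ℝ (Ioo (-1) 1) (fun m => -(h * m)) :=
    ((LinearMap.mulLeft ℝ (-h)).convexOn (convex_Ioo _ _)).congr fun m _ => by simp
  exact hlin.add_strictConvexOn hsum
end
end

section
/- Let κ > 0. For every m ∈ (−1,1) and every c ∈ (0,1) there exists a unique pair (q_+, q_−) ∈ [0,1]² satisfying the two equations q_+/(1−q_+) = e^κ · q_−/(1−q_−) and q_+·(1+m)/2 + q_−·(1−m)/2 = c. -/
/-!
Write `a = e^κ`. For `q₋ ∈ [0,1]` the first equation says exactly that `q₊` is the probability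
whose odds are `a` times those of `q₋`, i.e. `q₊ = a q₋ / (a q₋ + 1 - q₋)`. This map fixes `0`
and `1` and is continuous and increasing on `[0,1]`, so the left-hand side of the second
equation becomes a continuous, strictly increasing function of `q₋` running from `0` to `1`,
which takes the value `c` exactly once.
-/

open Set

/-- The probability whose odds are `a` times the odds of `t`. -/
noncomputable def scaleOdds (a t : ℝ) : ℝ := a * t / (a * t + (1 - t))

section ScaleOdds

variable {a t : ℝ}

lemma scaleOdds_denom_pos (ha : 0 < a) (ht : t ∈ Icc (0 : ℝ) 1) : 0 < a * t + (1 - t) := by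
  rcases ht.1.eq_or_lt with rfl | ht0
  · simp
  · nlinarith [ht.2]

@[simp] lemma scaleOdds_zero (a : ℝ) : scaleOdds a 0 = 0 := by simp [scaleOdds]

@[simp] lemma scaleOdds_one (ha : 0 < a) : scaleOdds a 1 = 1 := by
  simp [scaleOdds, ha.ne']

lemma scaleOdds_mem_Icc (ha : 0 < a) (ht : t ∈ Icc (0 : ℝ) 1) :
    scaleOdds a t ∈ Icc (0 : ℝ) 1 := by
  have hD := scaleOdds_denom_pos ha ht
  refine ⟨div_nonneg (mul_nonneg ha.le ht.1) hD.le, ?_⟩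
  rw [scaleOdds, div_le_one hD]
  linarith [ht.2]

lemma mul_one_sub_eq_iff_eq_scaleOdds {p : ℝ} (ha : 0 < a) (ht : t ∈ Icc (0 : ℝ) 1) :
    p * (1 - t) = a * (t * (1 - p)) ↔ p = scaleOdds a t := by
  rw [scaleOdds, eq_div_iff (scaleOdds_denom_pos ha ht).ne']
  constructor <;> intro h <;> linear_combination h

lemma strictMonoOn_scaleOdds (ha : 0 < a) : StrictMonoOn (scaleOdds a) (Icc (0 : ℝ) 1) := by
  intro s hs t ht hst
  rw [scaleOdds, scaleOdds, div_lt_div_iff₀ (scaleOdds_denom_pos ha hs)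
    (scaleOdds_denom_pos ha ht)]
  nlinarith

lemma continuousOn_scaleOdds (ha : 0 < a) : ContinuousOn (scaleOdds a) (Icc (0 : ℝ) 1) :=
  ContinuousOn.div (by fun_prop) (by fun_prop) fun _ ht ↦ (scaleOdds_denom_pos ha ht).ne'

end ScaleOdds

lemma StrictMonoOn.existsUnique_mem_Icc_eq {f : ℝ → ℝ} {a b c : ℝ} (hab : a ≤ b)
    (hmono : StrictMonoOn f (Icc a b)) (hcont : ContinuousOn f (Icc a b))
    (hc : c ∈ Icc (f a) (f b)) : ∃! t, t ∈ Icc a b ∧ f t = c := by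
  obtain ⟨t, ht, hft⟩ := intermediate_value_Icc hab hcont hc
  exact ⟨t, ⟨ht, hft⟩, fun s ⟨hs, hfs⟩ ↦ hmono.injOn hs ht (hfs.trans hft.symm)⟩

/-- The left-hand side of the second equation as a function of `q₋`. -/
noncomputable def mixScaleOdds (a m t : ℝ) : ℝ := scaleOdds a t * (1 + m) / 2 + t * (1 - m) / 2

lemma strictMonoOn_mixScaleOdds {a m : ℝ} (ha : 0 < a) (hm : m ∈ Ioo (-1 : ℝ) 1) :
    StrictMonoOn (mixScaleOdds a m) (Icc (0 : ℝ) 1) := by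
  intro s hs t ht hst
  have := strictMonoOn_scaleOdds ha hs ht hst
  simp only [mixScaleOdds]
  nlinarith [hm.1, hm.2]

lemma existsUnique_mixScaleOdds_eq {a m c : ℝ} (ha : 0 < a) (hm : m ∈ Ioo (-1 : ℝ) 1)
    (hc : c ∈ Icc (0 : ℝ) 1) : ∃! t, t ∈ Icc (0 : ℝ) 1 ∧ mixScaleOdds a m t = c := by
  refine (strictMonoOn_mixScaleOdds ha hm).existsUnique_mem_Icc_eq zero_le_one
    (((continuousOn_scaleOdds ha).mul continuousOn_const).div_const _ |>.add (by fun_prop)) ?_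
  have h0 : mixScaleOdds a m 0 = 0 := by simp [mixScaleOdds]
  have h1 : mixScaleOdds a m 1 = 1 := by simp [mixScaleOdds, ha]; ring
  rwa [h0, h1]

theorem statement12_general (κ : ℝ) :
    ∀ m ∈ Set.Ioo (-1 : ℝ) 1, ∀ c ∈ Set.Ioo (0 : ℝ) 1,
      ∃! q : ℝ × ℝ,
        q.1 ∈ Set.Icc (0 : ℝ) 1 ∧ q.2 ∈ Set.Icc (0 : ℝ) 1 ∧
        q.1 * (1 - q.2) = Real.exp κ * (q.2 * (1 - q.1)) ∧
        q.1 * (1 + m) / 2 + q.2 * (1 - m) / 2 = c := by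
  intro m hm c hc
  have ha := Real.exp_pos κ
  obtain ⟨t, ⟨ht, hmix⟩, huniq⟩ := existsUnique_mixScaleOdds_eq ha hm (Ioo_subset_Icc_self hc)
  refine ⟨(scaleOdds (Real.exp κ) t, t),
    ⟨scaleOdds_mem_Icc ha ht, ht, (mul_one_sub_eq_iff_eq_scaleOdds ha ht).2 rfl, hmix⟩, ?_⟩
  rintro ⟨p, q⟩ ⟨-, hq, hcross, hsum⟩
  obtain rfl : p = scaleOdds (Real.exp κ) q := (mul_one_sub_eq_iff_eq_scaleOdds ha hq).1 hcross
  obtain rfl : q = t := huniq q ⟨hq, hsum⟩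
  rfl

/-- For `κ > 0`, `m ∈ (−1,1)`, `c ∈ (0,1)` there is a unique pair
`(q_+, q_−) ∈ [0,1]²` with `q_+/(1−q_+) = e^κ q_−/(1−q_−)` (in cross-multiplied form,
so that `q_+ = 1` corresponds to `q_− = 1`) and `q_+(1+m)/2 + q_−(1−m)/2 = c`. -/
theorem statement12 (κ : ℝ) (hκ : 0 < κ) :
    ∀ m ∈ Set.Ioo (-1 : ℝ) 1, ∀ c ∈ Set.Ioo (0 : ℝ) 1,
      ∃! q : ℝ × ℝ,
        q.1 ∈ Set.Icc (0 : ℝ) 1 ∧ q.2 ∈ Set.Icc (0 : ℝ) 1 ∧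
        q.1 * (1 - q.2) = Real.exp κ * (q.2 * (1 - q.1)) ∧
        q.1 * (1 + m) / 2 + q.2 * (1 - m) / 2 = c :=
  statement12_general κ
end

section
/- Fix κ > 0 and m ∈ (−1,1). For c ∈ (0,1) let (q_+(c), q_−(c)) be the unique solution in [0,1]² of q_+/(1−q_+) = e^κ · q_−/(1−q_−) and q_+·(1+m)/2 + q_−·(1−m)/2 = c, and define h(c) = (1/2) log((1−q_+(c))/(1−q_−(c))). Then c ↦ q_+(c) and c ↦ q_−(c) are strictly increasing on (0,1), c ↦ h(c) is strictly decreasing on (0,1), h(c) < 0 for every c ∈ (0,1), and h(c) → 0 as c ↓ 0. -/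
/-!
With `E = e^κ > 1`, the first equation says that the odds of `q_+` are `E` times those of `q_−`;
odds are increasing, so `q_+` and `q_−` move in the same direction. Since `c` is a positive
combination of them, both must increase with `c`. Eliminating `q_−` gives
`(1 − q_+)/(1 − q_−) = 1 − (1 − E⁻¹) q_+`, so `h = ½ log (1 − (1 − E⁻¹) q_+)` is a strictly
decreasing function of `q_+`, vanishing at `q_+ = 0`; and `q_+(c) ≤ 2c/(1 + m) → 0`.
-/

open Filter Set Topology

section OddsRelation

variable {E p q : ℝ}

lemma eq_zero_iff_of_odds_eq (hE : E ≠ 0) (h : p * (1 - q) = E * (q * (1 - p))) :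
    p = 0 ↔ q = 0 := by
  constructor
  · rintro rfl
    simpa [hE] using h.symm
  · rintro rfl
    simpa using h

lemma eq_one_iff_of_odds_eq (hE : E ≠ 0) (h : p * (1 - q) = E * (q * (1 - p))) :
    p = 1 ↔ q = 1 := by
  constructor
  · rintro rfl
    linarith
  · rintro rfl
    have : E * (1 - p) = 0 := by linarith
    linarith [(mul_eq_zero.mp this).resolve_left hE]

lemma mem_Ioo_of_odds_eq {m : ℝ} (hE : E ≠ 0) (hp : p ∈ Icc 0 1) (hq : q ∈ Icc 0 1)
    (h : p * (1 - q) = E * (q * (1 - p))) (hc : p * (1 + m) / 2 + q * (1 - m) / 2 ∈ Ioo 0 1) :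
    p ∈ Ioo 0 1 ∧ q ∈ Ioo 0 1 := by
  have hp₀ : p ≠ 0 := fun h₀ => by
    have hq₀ := (eq_zero_iff_of_odds_eq hE h).mp h₀
    subst h₀ hq₀
    linarith [hc.1, hc.2]
  have hp₁ : p ≠ 1 := fun h₁ => by
    have hq₁ := (eq_one_iff_of_odds_eq hE h).mp h₁
    subst h₁ hq₁
    linarith [hc.1, hc.2]
  have hq₀ : q ≠ 0 := mt (eq_zero_iff_of_odds_eq hE h).mpr hp₀
  have hq₁ : q ≠ 1 := mt (eq_one_iff_of_odds_eq hE h).mpr hp₁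
  exact ⟨⟨hp.1.lt_of_ne' hp₀, hp.2.lt_of_ne hp₁⟩, ⟨hq.1.lt_of_ne' hq₀, hq.2.lt_of_ne hq₁⟩⟩

lemma le_iff_le_of_odds_eq {p₁ q₁ p₂ q₂ : ℝ} (hE : 0 < E) (hp₁ : p₁ ∈ Icc 0 1)
    (hp₂ : p₂ ∈ Icc 0 1) (h₁ : p₁ * (1 - q₁) = E * (q₁ * (1 - p₁)))
    (h₂ : p₂ * (1 - q₂) = E * (q₂ * (1 - p₂))) : p₁ ≤ p₂ ↔ q₁ ≤ q₂ := by
  have hD : ∀ p ∈ Icc (0 : ℝ) 1, 0 < p + E * (1 - p) := fun p ⟨h₀, h₁⟩ => by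
    rcases h₀.eq_or_lt with rfl | h₀
    · simpa using hE
    · nlinarith
  -- each equation says `q (p + E (1 - p)) = p`, with a positive factor `p + E (1 - p)`
  have key : (q₁ - q₂) * ((p₁ + E * (1 - p₁)) * (p₂ + E * (1 - p₂))) = E * (p₁ - p₂) := by
    linear_combination (p₁ + E * (1 - p₁)) * h₂ - (p₂ + E * (1 - p₂)) * h₁
  have hD₁₂ := mul_pos (hD p₁ hp₁) (hD p₂ hp₂)
  constructor <;> intro h <;> nlinarith

lemma div_one_sub_eq_of_odds_eq (hE : E ≠ 0) (hq : q ≠ 1)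
    (h : p * (1 - q) = E * (q * (1 - p))) : (1 - p) / (1 - q) = 1 - (1 - E⁻¹) * p := by
  rw [div_eq_iff (sub_ne_zero.mpr hq.symm)]
  field_simp
  linear_combination -h

end OddsRelation

lemma strictMonoOn_of_le_imp_le_of_add_eq {α : Type*} [Field α] [LinearOrder α]
    [IsStrictOrderedRing α] {S : Set α} {f g : α → α} {a b : α} (ha : 0 ≤ a) (hb : 0 ≤ b)
    (hfg : ∀ x ∈ S, ∀ y ∈ S, f x ≤ f y → g x ≤ g y) (hsum : ∀ x ∈ S, a * f x + b * g x = x) :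
    StrictMonoOn f S := by
  intro x hx y hy hxy
  by_contra! hf
  have hg := hfg y hy x hx hf
  linarith [hsum x hx, hsum y hy, mul_le_mul_of_nonneg_left hf ha,
    mul_le_mul_of_nonneg_left hg hb]

lemma strictMonoOn_of_odds_eq {E a b : ℝ} {S : Set ℝ} {p q : ℝ → ℝ} (hE : 0 < E)
    (ha : 0 ≤ a) (hb : 0 ≤ b) (hp : ∀ c ∈ S, p c ∈ Icc 0 1)
    (hodds : ∀ c ∈ S, p c * (1 - q c) = E * (q c * (1 - p c)))
    (hsum : ∀ c ∈ S, a * p c + b * q c = c) : StrictMonoOn p S ∧ StrictMonoOn q S := by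
  have hcouple : ∀ x ∈ S, ∀ y ∈ S, p x ≤ p y ↔ q x ≤ q y := fun x hx y hy =>
    le_iff_le_of_odds_eq hE (hp x hx) (hp y hy) (hodds x hx) (hodds y hy)
  exact ⟨strictMonoOn_of_le_imp_le_of_add_eq ha hb (fun x hx y hy => (hcouple x hx y hy).mp) hsum,
    strictMonoOn_of_le_imp_le_of_add_eq hb ha (fun x hx y hy => (hcouple x hx y hy).mpr)
      fun c hc => by rw [add_comm]; exact hsum c hc⟩

lemma Real.strictAntiOn_log_one_sub_mul {k : ℝ} (hk₀ : 0 < k) (hk₁ : k < 1) :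
    StrictAntiOn (fun p => Real.log (1 - k * p)) (Iic 1) := by
  intro x _ y hy hxy
  have hy' : k * y < 1 := by nlinarith [mem_Iic.mp hy]
  exact Real.log_lt_log (by linarith) (by nlinarith)

lemma Real.tendsto_log_one_sub_mul {α : Type*} {l : Filter α} {f : α → ℝ} (k : ℝ)
    (hf : Tendsto f l (𝓝 0)) : Tendsto (fun x => Real.log (1 - k * f x)) l (𝓝 0) := by
  have h₁ : Tendsto (fun x => 1 - k * f x) l (𝓝 1) := by
    simpa using (hf.const_mul k).const_sub 1
  simpa [Function.comp_def] using (Real.continuousAt_log one_ne_zero).tendsto.comp h₁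

lemma tendsto_nhdsGT_zero_of_nonneg_of_mul_le {f : ℝ → ℝ} {a : ℝ} (ha : 0 < a)
    (hf : ∀ᶠ x in 𝓝[>] 0, 0 ≤ f x ∧ a * f x ≤ x) : Tendsto f (𝓝[>] 0) (𝓝 0) := by
  have hlim : Tendsto (fun x : ℝ => x / a) (𝓝[>] 0) (𝓝 0) :=
    ((continuous_id.div_const a).tendsto' 0 0 (by simp)).mono_left nhdsWithin_le_nhds
  refine tendsto_of_tendsto_of_tendsto_of_le_of_le' tendsto_const_nhds hlim
    (hf.mono fun x hx => hx.1) (hf.mono fun x hx => ?_)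
  rw [le_div_iff₀ ha, mul_comm]
  exact hx.2

/-- (Proof of Proposition 2.2 of the paper.) If `(q_+(c), q_−(c))` solves
the mole-fraction equations for each `c ∈ (0,1)` and
`h(c) = ½ log((1−q_+(c))/(1−q_−(c)))`, then `q_±` are strictly increasing, `h` is strictly
decreasing and negative on `(0,1)`, and `h(c) → 0` as `c ↓ 0`. -/
theorem statement14 (κ m : ℝ) (hκ : 0 < κ) (hm : m ∈ Set.Ioo (-1 : ℝ) 1)
    (qp qm : ℝ → ℝ)
    (hq : ∀ c ∈ Set.Ioo (0 : ℝ) 1,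
      qp c ∈ Set.Icc (0 : ℝ) 1 ∧ qm c ∈ Set.Icc (0 : ℝ) 1 ∧
      qp c * (1 - qm c) = Real.exp κ * (qm c * (1 - qp c)) ∧
      qp c * (1 + m) / 2 + qm c * (1 - m) / 2 = c) :
    StrictMonoOn qp (Set.Ioo (0 : ℝ) 1) ∧
    StrictMonoOn qm (Set.Ioo (0 : ℝ) 1) ∧
    StrictAntiOn (fun c => (1 / 2) * Real.log ((1 - qp c) / (1 - qm c)))
      (Set.Ioo (0 : ℝ) 1) ∧
    (∀ c ∈ Set.Ioo (0 : ℝ) 1, (1 / 2) * Real.log ((1 - qp c) / (1 - qm c)) < 0) ∧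
    Tendsto (fun c => (1 / 2) * Real.log ((1 - qp c) / (1 - qm c)))
      (nhdsWithin 0 (Set.Ioi 0)) (nhds 0) := by
  obtain ⟨hm₁, hm₂⟩ := hm
  have hE : 0 < Real.exp κ := Real.exp_pos κ
  have hsum : ∀ c ∈ Ioo (0 : ℝ) 1, (1 + m) / 2 * qp c + (1 - m) / 2 * qm c = c :=
    fun c hc => by linarith [(hq c hc).2.2.2]
  have hint : ∀ c ∈ Ioo (0 : ℝ) 1, qp c ∈ Ioo 0 1 ∧ qm c ∈ Ioo 0 1 := fun c hc =>
    have ⟨hp, hq', hodds, hc'⟩ := hq c hc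
    mem_Ioo_of_odds_eq hE.ne' hp hq' hodds (hc' ▸ hc)
  obtain ⟨hqp, hqm⟩ := strictMonoOn_of_odds_eq (a := (1 + m) / 2) (b := (1 - m) / 2) hE
    (by linarith) (by linarith) (fun c hc => (hq c hc).1) (fun c hc => (hq c hc).2.2.1) hsum
  set k := 1 - (Real.exp κ)⁻¹
  have hk₀ : 0 < k := sub_pos.mpr (inv_lt_one_of_one_lt₀ (Real.one_lt_exp_iff.mpr hκ))
  have hk₁ : k < 1 := sub_lt_self _ (inv_pos.mpr hE)
  have hratio : ∀ c ∈ Ioo (0 : ℝ) 1, (1 - qp c) / (1 - qm c) = 1 - k * qp c := fun c hc =>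
    div_one_sub_eq_of_odds_eq hE.ne' (hint c hc).2.2.ne (hq c hc).2.2.1
  have hmaps : MapsTo qp (Ioo 0 1) (Iic 1) := fun c hc => (hint c hc).1.2.le
  have hlog := Real.strictAntiOn_log_one_sub_mul hk₀ hk₁
  refine ⟨hqp, hqm, fun x hx y hy hxy => ?_, fun c hc => ?_, ?_⟩
  · have hanti : Real.log (1 - k * qp y) < Real.log (1 - k * qp x) :=
      hlog.comp_strictMonoOn hqp hmaps hx hy hxy
    simp only [hratio x hx, hratio y hy]
    linarith
  · have hneg := hlog (mem_Iic.mpr zero_le_one) (hmaps hc) (hint c hc).1.1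
    simp only [mul_zero, sub_zero, Real.log_one] at hneg
    rw [hratio c hc]
    linarith
  · have hqp_lim : Tendsto qp (𝓝[>] 0) (𝓝 0) :=
      tendsto_nhdsGT_zero_of_nonneg_of_mul_le (a := (1 + m) / 2) (by linarith) <|
        eventually_of_mem (Ioo_mem_nhdsGT zero_lt_one) fun c hc =>
          ⟨(hint c hc).1.1.le, by nlinarith [hsum c hc, (hint c hc).2.1]⟩
    have hlim := (Real.tendsto_log_one_sub_mul k hqp_lim).const_mul (1 / 2 : ℝ)
    rw [mul_zero] at hlim
    exact hlim.congr' <|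
      eventually_of_mem (Ioo_mem_nhdsGT zero_lt_one) fun c hc => by simp only [hratio c hc]
end
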